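/- Let H be a Hopf algebra over a field k and K a right coideal subalgebra of H. Then the canonical map can : H ⊗_K H → (H/HK⁺) ⊗ H, x ⊗ y ↦ (x_{(1)} + HK⁺) ⊗ x_{(2)}y, is bijective, with inverse (x + HK⁺) ⊗ y ↦ x_{(1)} ⊗ S(x_{(2)})y. In particular the extension ^{co H/HK⁺}H ⊆ H is H/HK⁺-Galois. -/

import Mathlib

open TensorProduct

variable {k H : Type*} [Field k] [Ring H] [HopfAlgebra k H]

/-- A right coideal subalgebra: a subalgebra `K` of `H` with `Δ(K) ⊆ K ⊗ H`. -/
def IsRightCoidealSubalgebra (K : Subalgebra k H) : Prop :=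
  ∀ x ∈ K, Coalgebra.comul (R := k) x ∈
    LinearMap.range (LinearMap.rTensor H K.toSubmodule.subtype)

/-- A left ideal coideal of `H`: `HI ⊆ I`, `Δ(I) ⊆ I ⊗ H + H ⊗ I`, `ε(I) = 0`. -/
def IsLeftIdealCoideal (I : Submodule k H) : Prop :=
  (∀ x ∈ I, ∀ h : H, h * x ∈ I) ∧
  (∀ x ∈ I, Coalgebra.comul (R := k) x ∈
      LinearMap.range (LinearMap.rTensor H I.subtype) ⊔
        LinearMap.range (LinearMap.lTensor H I.subtype)) ∧
  ∀ x ∈ I, Coalgebra.counit (R := k) x = 0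

/-- The augmentation ideal `W⁺ = W ∩ ker ε` of a subspace `W ⊆ H`. -/
def augIdeal (W : Submodule k H) : Submodule k H :=
  W ⊓ LinearMap.ker (Coalgebra.counit (R := k) (A := H))

/-- The left ideal `H·W` generated by a subspace `W ⊆ H`. -/
def leftIdealGen (W : Submodule k H) : Submodule k H :=
  Submodule.span k {x : H | ∃ h : H, ∃ y ∈ W, x = h * y}

/-- The coinvariants `^{co H/I}H = { h : π(h₁) ⊗ h₂ = π(1) ⊗ h }` of the left
coaction of the quotient coalgebra `H/I` on `H`. -/
def lCoinv (I : Submodule k H) : Set H :=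
  {h : H | LinearMap.rTensor H I.mkQ (Coalgebra.comul (R := k) h) =
    I.mkQ 1 ⊗ₜ[k] h}

/-- The Galois map `H ⊗ H → H ⊗ H`, `x ⊗ y ↦ x₁ ⊗ x₂·y = Δ(x)·(1 ⊗ y)`. -/
noncomputable def hGaloisMap : H ⊗[k] H →ₗ[k] H ⊗[k] H :=
  TensorProduct.lift
    (((LinearMap.mul k (H ⊗[k] H)).comp (Coalgebra.comul (R := k))).compl₂
      (Algebra.TensorProduct.includeRight : H →ₐ[k] H ⊗[k] H).toLinearMap)

/-- The canonical map `H ⊗ H → (H/I) ⊗ H`, `x ⊗ y ↦ π(x₁) ⊗ x₂·y`. -/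
noncomputable def hCanMap (I : Submodule k H) : H ⊗[k] H →ₗ[k] (H ⧸ I) ⊗[k] H :=
  (LinearMap.rTensor H I.mkQ).comp (hGaloisMap (k := k))

/-- The map `H ⊗ H → H ⊗ H`, `x ⊗ y ↦ x₁ ⊗ S(x₂)·y`, inducing the inverse of the
canonical map. -/
noncomputable def hInvMap : H ⊗[k] H →ₗ[k] H ⊗[k] H :=
  TensorProduct.lift
    (((LinearMap.mul k (H ⊗[k] H)).comp
        ((LinearMap.lTensor H (HopfAlgebra.antipode (R := k))).comp
          (Coalgebra.comul (R := k)))).compl₂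
      (Algebra.TensorProduct.includeRight : H →ₐ[k] H ⊗[k] H).toLinearMap)

/-- The kernel of `H ⊗[k] H → H ⊗_B H`, for `B ⊆ H` a subset: the span of the
elements `(x·b) ⊗ y − x ⊗ (b·y)` with `b ∈ B`. -/
def hRelSub (B : Set H) : Submodule k (H ⊗[k] H) :=
  Submodule.span k
    {z : H ⊗[k] H | ∃ x y : H, ∃ b ∈ B, z = (x * b) ⊗ₜ[k] y - x ⊗ₜ[k] (b * y)}

open Coalgebra

local notation "S" => HopfAlgebra.antipode (R := k) (A := H)

lemma hGaloisMap_tmul (x y : H) :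
    hGaloisMap (x ⊗ₜ[k] y) = Coalgebra.comul (R := k) x * ((1 : H) ⊗ₜ[k] y) := by
  simp [hGaloisMap, Algebra.TensorProduct.includeRight]

lemma hInvMap_tmul (x y : H) :
    hInvMap (x ⊗ₜ[k] y) =
      LinearMap.lTensor H S (Coalgebra.comul (R := k) x) * ((1 : H) ⊗ₜ[k] y) := by
  simp [hInvMap, Algebra.TensorProduct.includeRight]

lemma repr_sum_smul_left {x : H} {ι : Type*} (r : Coalgebra.Repr k x ι) :
    ∑ i ∈ r.index, counit (R := k) (r.right i) • r.left i = x := by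
  have h := congrArg (TensorProduct.rid k H) (Coalgebra.sum_tmul_counit_eq r)
  simp only [map_sum, TensorProduct.rid_tmul] at h
  simpa using h

lemma repr_sum_smul_right {x : H} {ι : Type*} (r : Coalgebra.Repr k x ι) :
    ∑ i ∈ r.index, counit (R := k) (r.left i) • r.right i = x := by
  have h := congrArg (TensorProduct.lid k H) (Coalgebra.sum_counit_tmul_eq r)
  simp only [map_sum, TensorProduct.lid_tmul] at h
  simpa using h

lemma hGaloisMap_tmul_repr (x y : H) {ι : Type*} (r : Coalgebra.Repr k x ι) :
    hGaloisMap (x ⊗ₜ[k] y) = ∑ i ∈ r.index, r.left i ⊗ₜ[k] (r.right i * y) := by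
  rw [hGaloisMap_tmul, ← r.eq, Finset.sum_mul]
  simp [Algebra.TensorProduct.tmul_mul_tmul]

lemma hInvMap_tmul_repr (x y : H) {ι : Type*} (r : Coalgebra.Repr k x ι) :
    hInvMap (x ⊗ₜ[k] y) = ∑ i ∈ r.index, r.left i ⊗ₜ[k] (S (r.right i) * y) := by
  rw [hInvMap_tmul, ← r.eq, map_sum, Finset.sum_mul]
  simp [Algebra.TensorProduct.tmul_mul_tmul]

/-- `∑ x₁ ⊗ S(x₂)·x₃ = x ⊗ 1`. -/
lemma identL (x : H) {ι : Type*} (r : Coalgebra.Repr k x ι) (a : ∀ i, Coalgebra.Repr k (r.left i) (H × H)) :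
    ∑ i ∈ r.index, ∑ j ∈ (a i).index,
      (a i).left j ⊗ₜ[k] (S ((a i).right j) * r.right i) = x ⊗ₜ[k] (1 : H) := by
  have c := Coalgebra.sum_tmul_tmul_eq r a (fun i => Coalgebra.Repr.arbitrary k (r.right i))
  have h := congrArg (LinearMap.lTensor H
    ((LinearMap.mul' k H).comp (LinearMap.rTensor H S))) c
  simp only [map_sum, LinearMap.lTensor_tmul, LinearMap.coe_comp, Function.comp_apply,
    LinearMap.rTensor_tmul, LinearMap.mul'_apply] at h
  rw [h]
  have e : ∀ i ∈ r.index,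
      ∑ j ∈ (Coalgebra.Repr.arbitrary k (r.right i)).index,
        r.left i ⊗ₜ[k]
          (S ((Coalgebra.Repr.arbitrary k (r.right i)).left j) *
            (Coalgebra.Repr.arbitrary k (r.right i)).right j) =
      (counit (R := k) (r.right i) • r.left i) ⊗ₜ[k] (1 : H) := by
    intro i _
    rw [← TensorProduct.tmul_sum, HopfAlgebra.sum_antipode_mul_eq_algebraMap_counit, Algebra.algebraMap_eq_smul_one,
      TensorProduct.tmul_smul, TensorProduct.smul_tmul']
  rw [Finset.sum_congr rfl e, ← TensorProduct.sum_tmul, repr_sum_smul_left r]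

/-- `∑ x₁ ⊗ x₂·S(x₃) = x ⊗ 1`. -/
lemma identR (x : H) {ι : Type*} (r : Coalgebra.Repr k x ι) (a : ∀ i, Coalgebra.Repr k (r.left i) (H × H)) :
    ∑ i ∈ r.index, ∑ j ∈ (a i).index,
      (a i).left j ⊗ₜ[k] ((a i).right j * S (r.right i)) = x ⊗ₜ[k] (1 : H) := by
  have c := Coalgebra.sum_tmul_tmul_eq r a (fun i => Coalgebra.Repr.arbitrary k (r.right i))
  have h := congrArg (LinearMap.lTensor H
    ((LinearMap.mul' k H).comp (LinearMap.lTensor H S))) c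
  simp only [map_sum, LinearMap.lTensor_tmul, LinearMap.coe_comp, Function.comp_apply,
    LinearMap.mul'_apply] at h
  rw [h]
  have e : ∀ i ∈ r.index,
      ∑ j ∈ (Coalgebra.Repr.arbitrary k (r.right i)).index,
        r.left i ⊗ₜ[k]
          ((Coalgebra.Repr.arbitrary k (r.right i)).left j *
            S ((Coalgebra.Repr.arbitrary k (r.right i)).right j)) =
      (counit (R := k) (r.right i) • r.left i) ⊗ₜ[k] (1 : H) := by
    intro i _
    rw [← TensorProduct.tmul_sum, HopfAlgebra.sum_mul_antipode_eq_algebraMap_counit, Algebra.algebraMap_eq_smul_one,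
      TensorProduct.tmul_smul, TensorProduct.smul_tmul']
  rw [Finset.sum_congr rfl e, ← TensorProduct.sum_tmul, repr_sum_smul_left r]

/-- `∑ S(x₁)·x₂ ⊗ x₃ = 1 ⊗ x`. -/
lemma identS (x : H) {ι : Type*} (r : Coalgebra.Repr k x ι) (a : ∀ i, Coalgebra.Repr k (r.right i) (H × H)) :
    ∑ i ∈ r.index, ∑ j ∈ (a i).index,
      (S (r.left i) * (a i).left j) ⊗ₜ[k] (a i).right j = (1 : H) ⊗ₜ[k] x := by
  have c := Coalgebra.sum_tmul_tmul_eq r (fun i => Coalgebra.Repr.arbitrary k (r.left i)) a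
  have h := congrArg
    ((LinearMap.rTensor H ((LinearMap.mul' k H).comp (LinearMap.rTensor H S))).comp
      (TensorProduct.assoc k H H H).symm.toLinearMap) c
  simp only [map_sum, LinearMap.coe_comp, LinearEquiv.coe_coe, Function.comp_apply,
    TensorProduct.assoc_symm_tmul, LinearMap.rTensor_tmul, LinearMap.mul'_apply] at h
  rw [← h]
  have e : ∀ i ∈ r.index,
      ∑ j ∈ (Coalgebra.Repr.arbitrary k (r.left i)).index,
        (S ((Coalgebra.Repr.arbitrary k (r.left i)).left j) *
            (Coalgebra.Repr.arbitrary k (r.left i)).right j) ⊗ₜ[k] r.right i =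
      counit (R := k) (r.left i) • ((1 : H) ⊗ₜ[k] r.right i) := by
    intro i _
    rw [← TensorProduct.sum_tmul, HopfAlgebra.sum_antipode_mul_eq_algebraMap_counit, Algebra.algebraMap_eq_smul_one,
      TensorProduct.smul_tmul']
  rw [Finset.sum_congr rfl e]
  simp only [← TensorProduct.tmul_smul, ← TensorProduct.tmul_sum]
  rw [repr_sum_smul_right r]

lemma hInv_hGalois (z : H ⊗[k] H) : hInvMap (hGaloisMap z) = z := by
  induction z with
  | zero => simp
  | add u v hu hv => simp [map_add, hu, hv]
  | tmul x y =>
    set r := Coalgebra.Repr.arbitrary k x with hr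
    set a : ∀ i, Coalgebra.Repr k (r.left i) (H × H) := fun i => Coalgebra.Repr.arbitrary k (r.left i)
    rw [hGaloisMap_tmul_repr x y r, map_sum]
    have e : ∀ i ∈ r.index,
        hInvMap (r.left i ⊗ₜ[k] (r.right i * y)) =
        ∑ j ∈ (a i).index, (a i).left j ⊗ₜ[k]
          ((S ((a i).right j) * r.right i) * y) := by
      intro i _
      rw [hInvMap_tmul_repr _ _ (a i)]
      exact Finset.sum_congr rfl fun j _ => by rw [mul_assoc]
    rw [Finset.sum_congr rfl e]
    have h := congrArg (LinearMap.lTensor H (LinearMap.mulRight k y)) (identL x r a)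
    simp only [map_sum, LinearMap.lTensor_tmul, LinearMap.mulRight_apply, one_mul] at h
    exact h

lemma hGalois_hInv (z : H ⊗[k] H) : hGaloisMap (hInvMap z) = z := by
  induction z with
  | zero => simp
  | add u v hu hv => simp [map_add, hu, hv]
  | tmul x y =>
    set r := Coalgebra.Repr.arbitrary k x with hr
    set a : ∀ i, Coalgebra.Repr k (r.left i) (H × H) := fun i => Coalgebra.Repr.arbitrary k (r.left i)
    rw [hInvMap_tmul_repr x y r, map_sum]
    have e : ∀ i ∈ r.index,
        hGaloisMap (r.left i ⊗ₜ[k] (S (r.right i) * y)) =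
        ∑ j ∈ (a i).index, (a i).left j ⊗ₜ[k]
          (((a i).right j * S (r.right i)) * y) := by
      intro i _
      rw [hGaloisMap_tmul_repr _ _ (a i)]
      exact Finset.sum_congr rfl fun j _ => by rw [mul_assoc]
    rw [Finset.sum_congr rfl e]
    have h := congrArg (LinearMap.lTensor H (LinearMap.mulRight k y)) (identR x r a)
    simp only [map_sum, LinearMap.lTensor_tmul, LinearMap.mulRight_apply, one_mul] at h
    exact h

noncomputable def mulRepr {a b : H} {ι κ : Type*} (r : Coalgebra.Repr k a ι)
    (s : Coalgebra.Repr k b κ) : Coalgebra.Repr k (a * b) (ι × κ) where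
  index := r.index ×ˢ s.index
  left := fun x => r.left x.1 * s.left x.2
  right := fun x => r.right x.1 * s.right x.2
  eq := by
    have : CoalgebraStruct.comul (R := k) (a * b) = Coalgebra.comul (R := k) a *
        Coalgebra.comul (R := k) b := Bialgebra.comul_mul a b
    rw [this, ← r.eq, ← s.eq, Finset.sum_mul_sum, Finset.sum_product]
    simp [Algebra.TensorProduct.tmul_mul_tmul]

lemma antipode_mul (a b : H) : S (a * b) = S b * S a := by
  classical
  set ra := Coalgebra.Repr.arbitrary k a with hra
  set ra2 : ∀ i, Coalgebra.Repr k (ra.right i) (H × H) :=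
    fun i => Coalgebra.Repr.arbitrary k (ra.right i) with hra2
  set rb := Coalgebra.Repr.arbitrary k b with hrb
  set rb2 : ∀ p, Coalgebra.Repr k (rb.right p) (H × H) :=
    fun p => Coalgebra.Repr.arbitrary k (rb.right p) with hrb2
  have Pa := identS a ra ra2
  have Pb := identS b rb rb2
  -- the four-fold sum
  set T : (p : rb.ι) → (rb2 p).ι → (i : ra.ι) → (ra2 i).ι → H :=
    fun p q i j =>
      (S (rb.left p) * (S (ra.left i) * (ra2 i).left j)) *
        ((rb2 p).left q * S ((ra2 i).right j * (rb2 p).right q)) with hT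
  -- collapse the a-indices at fixed (p, q)
  have step1 : ∀ p q,
      ∑ i ∈ ra.index, ∑ j ∈ (ra2 i).index, T p q i j =
      (S (rb.left p) * 1) * ((rb2 p).left q * S (a * (rb2 p).right q)) := by
    intro p q
    have h := congrArg ((LinearMap.mul' k H).comp
      (TensorProduct.map (LinearMap.mulLeft k (S (rb.left p)))
        ((LinearMap.mulLeft k ((rb2 p).left q)).comp
          ((HopfAlgebra.antipode (R := k) (A := H)).comp
            (LinearMap.mulRight k ((rb2 p).right q)))))) Pa
    simpa only [map_sum, LinearMap.coe_comp, Function.comp_apply, TensorProduct.map_tmul,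
      LinearMap.mul'_apply, LinearMap.mulLeft_apply, LinearMap.mulRight_apply] using h
  -- collapse the second-level indices at fixed (i, p)
  have step2 : ∀ p i,
      ∑ j ∈ (ra2 i).index, ∑ q ∈ (rb2 p).index, T p q i j =
      (counit (R := k) (ra.right i * rb.right p)) • (S (rb.left p) * S (ra.left i)) := by
    intro p i
    have key : ∑ j ∈ (ra2 i).index, ∑ q ∈ (rb2 p).index,
        ((ra2 i).left j * (rb2 p).left q) ⊗ₜ[k] ((ra2 i).right j * (rb2 p).right q) =
        Coalgebra.comul (R := k) (ra.right i * rb.right p) := by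
      rw [Bialgebra.comul_mul, ← (ra2 i).eq, ← (rb2 p).eq, Finset.sum_mul_sum]
      simp only [Algebra.TensorProduct.tmul_mul_tmul]
    have h := congrArg ((LinearMap.mul' k H).comp (LinearMap.lTensor H S)) key
    simp only [map_sum, LinearMap.coe_comp, Function.comp_apply, LinearMap.lTensor_tmul,
      LinearMap.mul'_apply] at h
    rw [HopfAlgebra.mul_antipode_lTensor_comul_apply] at h
    have h2 := congrArg (fun z => (S (rb.left p) * S (ra.left i)) * z) h
    simp only [Finset.mul_sum] at h2
    rw [Algebra.algebraMap_eq_smul_one, mul_smul_comm, mul_one] at h2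
    rw [← h2]
    exact Finset.sum_congr rfl fun j _ => Finset.sum_congr rfl fun q _ => by
      simp only [hT, mul_assoc]
  -- collapse the b-indices
  have step3 :
      ∑ p ∈ rb.index, ∑ q ∈ (rb2 p).index,
        (S (rb.left p) * 1) * ((rb2 p).left q * S (a * (rb2 p).right q)) = S (a * b) := by
    have h := congrArg ((LinearMap.mul' k H).comp
      (TensorProduct.map LinearMap.id
        ((HopfAlgebra.antipode (R := k) (A := H)).comp (LinearMap.mulLeft k a)))) Pb
    simp only [map_sum, LinearMap.coe_comp, Function.comp_apply, TensorProduct.map_tmul,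
      LinearMap.mul'_apply, LinearMap.mulLeft_apply, LinearMap.id_coe, id_eq, one_mul] at h
    rw [← h]
    exact Finset.sum_congr rfl fun p _ => Finset.sum_congr rfl fun q _ => by
      simp only [mul_one, mul_assoc]
  -- assemble
  have e1 : ∑ p ∈ rb.index, ∑ q ∈ (rb2 p).index, ∑ i ∈ ra.index, ∑ j ∈ (ra2 i).index,
      T p q i j = S (a * b) := by
    rw [← step3]
    exact Finset.sum_congr rfl fun p _ => Finset.sum_congr rfl fun q _ => step1 p q
  have e2 : ∑ p ∈ rb.index, ∑ q ∈ (rb2 p).index, ∑ i ∈ ra.index, ∑ j ∈ (ra2 i).index,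
      T p q i j = S b * S a := by
    have swap : ∀ p ∈ rb.index,
        ∑ q ∈ (rb2 p).index, ∑ i ∈ ra.index, ∑ j ∈ (ra2 i).index, T p q i j =
        ∑ i ∈ ra.index, ∑ j ∈ (ra2 i).index, ∑ q ∈ (rb2 p).index, T p q i j := by
      intro p _
      rw [Finset.sum_comm]
      exact Finset.sum_congr rfl fun i _ => Finset.sum_comm
    rw [Finset.sum_congr rfl swap]
    have : ∀ p ∈ rb.index,
        ∑ i ∈ ra.index, ∑ j ∈ (ra2 i).index, ∑ q ∈ (rb2 p).index, T p q i j =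
        ∑ i ∈ ra.index,
          (counit (R := k) (ra.right i * rb.right p)) • (S (rb.left p) * S (ra.left i)) :=
      fun p _ => Finset.sum_congr rfl fun i _ => step2 p i
    rw [Finset.sum_congr rfl this]
    have hb : S b = ∑ p ∈ rb.index, counit (R := k) (rb.right p) • S (rb.left p) := by
      conv_lhs => rw [← repr_sum_smul_left rb]
      rw [map_sum]; simp only [map_smul]
    have ha : S a = ∑ i ∈ ra.index, counit (R := k) (ra.right i) • S (ra.left i) := by
      conv_lhs => rw [← repr_sum_smul_left ra]
      rw [map_sum]; simp only [map_smul]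
    rw [hb, ha, Finset.sum_mul_sum]
    exact Finset.sum_congr rfl fun p _ => Finset.sum_congr rfl fun i _ => by
      rw [Bialgebra.counit_mul, smul_mul_assoc, mul_smul_comm, smul_smul, mul_comm]
  rw [← e1, e2]

lemma leftIdealGen_mul_mem (W : Submodule k H) {x : H} (hx : x ∈ leftIdealGen W) (h : H) :
    h * x ∈ leftIdealGen W := by
  induction hx using Submodule.span_induction with
  | mem z hz =>
    obtain ⟨g, w, hw, rfl⟩ := hz
    exact Submodule.subset_span ⟨h * g, w, hw, (mul_assoc _ _ _).symm⟩
  | zero => simp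
  | add u v _ _ hu hv => rw [mul_add]; exact add_mem hu hv
  | smul c u _ hu => rw [mul_smul_comm]; exact Submodule.smul_mem _ c hu

lemma tmul_mem_range_rTensor {I : Submodule k H} {u : H} (hu : u ∈ I) (v : H) :
    u ⊗ₜ[k] v ∈ LinearMap.range (LinearMap.rTensor H I.subtype) :=
  ⟨(⟨u, hu⟩ : I) ⊗ₜ[k] v, by simp⟩

lemma sub_counit_mem_aug (K : Subalgebra k H) {c : H} (hc : c ∈ K) :
    c - Coalgebra.counit (R := k) c • 1 ∈ augIdeal K.toSubmodule := by
  refine Submodule.mem_inf.mpr ⟨sub_mem hc (Submodule.smul_mem _ _ (one_mem K)), ?_⟩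
  simp [LinearMap.mem_ker, map_sub, map_smul, Bialgebra.counit_one, smul_eq_mul]

/-- A representation of `comul b` with left legs in `K`, for `b ∈ K`. -/
lemma coideal_repr (K : Subalgebra k H) (hK : IsRightCoidealSubalgebra K) {b : H}
    (hb : b ∈ K) : ∃ (s : Finset (↥K.toSubmodule × H)),
      ∑ p ∈ s, ((p.1 : H)) ⊗ₜ[k] p.2 = Coalgebra.comul (R := k) b := by
  obtain ⟨t, ht⟩ := hK b hb
  obtain ⟨s, hs⟩ := TensorProduct.exists_finset (R := k) t
  refine ⟨s, ?_⟩
  rw [← ht, hs, map_sum]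
  simp

lemma galois_gen_mem (K : Subalgebra k H) (hK : IsRightCoidealSubalgebra K) (x y b : H)
    (hb : b ∈ K) :
    hGaloisMap ((x * b) ⊗ₜ[k] y - x ⊗ₜ[k] (b * y)) ∈
      LinearMap.range (LinearMap.rTensor H (leftIdealGen (augIdeal K.toSubmodule)).subtype) := by
  obtain ⟨s, heq⟩ := coideal_repr K hK hb
  set rb : Coalgebra.Repr k b (↥K.toSubmodule × H) :=
    ⟨s, fun p => ((p.1 : H)), fun p => p.2, heq⟩ with hrb
  set rx := Coalgebra.Repr.arbitrary k x with hrx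
  rw [map_sub, hGaloisMap_tmul_repr (x * b) y (mulRepr rx rb), hGaloisMap_tmul_repr x (b * y) rx]
  have e1 : ∑ z ∈ (mulRepr rx rb).index,
        (mulRepr rx rb).left z ⊗ₜ[k] ((mulRepr rx rb).right z * y) =
      ∑ z ∈ rx.index ×ˢ s, (rx.left z.1 * (z.2.1 : H)) ⊗ₜ[k] (rx.right z.1 * (z.2.2 * y)) :=
    Finset.sum_congr rfl fun z _ => by
      show (rx.left z.1 * (z.2.1 : H)) ⊗ₜ[k] ((rx.right z.1 * z.2.2) * y) = _
      rw [mul_assoc]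
  have e2 : ∑ i ∈ rx.index, rx.left i ⊗ₜ[k] (rx.right i * (b * y)) =
      ∑ z ∈ rx.index ×ˢ s,
        counit (R := k) ((z.2.1 : H)) • (rx.left z.1 ⊗ₜ[k] (rx.right z.1 * (z.2.2 * y))) := by
    rw [Finset.sum_product]
    refine Finset.sum_congr rfl fun i _ => ?_
    have hb' : b = ∑ p ∈ s, counit (R := k) ((p.1 : H)) • p.2 := (repr_sum_smul_right rb).symm
    rw [hb', Finset.sum_mul, Finset.mul_sum, TensorProduct.tmul_sum]
    exact Finset.sum_congr rfl fun p _ => by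
      rw [smul_mul_assoc, mul_smul_comm, TensorProduct.tmul_smul]
  rw [e1, e2, ← Finset.sum_sub_distrib]
  refine Submodule.sum_mem _ fun z hz => ?_
  have e3 : (rx.left z.1 * (z.2.1 : H)) ⊗ₜ[k] (rx.right z.1 * (z.2.2 * y)) -
      counit (R := k) ((z.2.1 : H)) • (rx.left z.1 ⊗ₜ[k] (rx.right z.1 * (z.2.2 * y))) =
      (rx.left z.1 * ((z.2.1 : H) - counit (R := k) ((z.2.1 : H)) • 1)) ⊗ₜ[k]
        (rx.right z.1 * (z.2.2 * y)) := by
    rw [mul_sub, mul_smul_comm, mul_one, TensorProduct.sub_tmul, TensorProduct.smul_tmul']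
  rw [e3]
  refine tmul_mem_range_rTensor ?_ _
  exact Submodule.subset_span
    ⟨rx.left z.1, (z.2.1 : H) - Coalgebra.counit (R := k) ((z.2.1 : H)) • 1,
      sub_counit_mem_aug K z.2.1.2, rfl⟩

lemma hInv_gen_mem (K : Subalgebra k H) (hK : IsRightCoidealSubalgebra K) (y : H) :
    ∀ x ∈ leftIdealGen (augIdeal K.toSubmodule),
      hInvMap (x ⊗ₜ[k] y) ∈ hRelSub (K : Set H) := by
  intro x hx
  induction hx using Submodule.span_induction with
  | zero => rw [TensorProduct.zero_tmul, map_zero]; exact zero_mem _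
  | add u v _ _ hu hv => rw [TensorProduct.add_tmul, map_add]; exact add_mem hu hv
  | smul c u _ hu => rw [← TensorProduct.smul_tmul', map_smul]; exact Submodule.smul_mem _ c hu
  | mem z hz =>
    obtain ⟨h, w, hw, rfl⟩ := hz
    obtain ⟨hwK, hwe⟩ := Submodule.mem_inf.mp hw
    have hwe' : Coalgebra.counit (R := k) w = 0 := hwe
    obtain ⟨s, heq⟩ := coideal_repr K hK hwK
    set rw' : Coalgebra.Repr k w (↥K.toSubmodule × H) := ⟨s, fun p => ((p.1 : H)), fun p => p.2, heq⟩ with hrw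
    set rh := Coalgebra.Repr.arbitrary k h with hrh
    rw [hInvMap_tmul_repr _ _ (mulRepr rh rw')]
    have e1 : ∑ z ∈ (mulRepr rh rw').index,
          (mulRepr rh rw').left z ⊗ₜ[k] (S ((mulRepr rh rw').right z) * y) =
        ∑ z ∈ rh.index ×ˢ s,
          (rh.left z.1 * (z.2.1 : H)) ⊗ₜ[k] (S z.2.2 * (S (rh.right z.1) * y)) :=
      Finset.sum_congr rfl fun z _ => by
        show (rh.left z.1 * (z.2.1 : H)) ⊗ₜ[k] (S (rh.right z.1 * z.2.2) * y) = _
        rw [antipode_mul, mul_assoc]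
    rw [e1]
    have e2 : ∀ z ∈ rh.index ×ˢ s,
        (rh.left z.1 * (z.2.1 : H)) ⊗ₜ[k] (S z.2.2 * (S (rh.right z.1) * y)) =
        ((rh.left z.1 * (z.2.1 : H)) ⊗ₜ[k] (S z.2.2 * (S (rh.right z.1) * y)) -
          rh.left z.1 ⊗ₜ[k] ((z.2.1 : H) * (S z.2.2 * (S (rh.right z.1) * y)))) +
        rh.left z.1 ⊗ₜ[k] ((z.2.1 : H) * (S z.2.2 * (S (rh.right z.1) * y))) :=
      fun z _ => (sub_add_cancel _ _).symm
    rw [Finset.sum_congr rfl e2, Finset.sum_add_distrib]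
    refine add_mem (Submodule.sum_mem _ fun z _ => Submodule.subset_span
      ⟨rh.left z.1, S z.2.2 * (S (rh.right z.1) * y), (z.2.1 : H), z.2.1.2, rfl⟩) ?_
    have e3 : ∑ z ∈ rh.index ×ˢ s,
        rh.left z.1 ⊗ₜ[k] ((z.2.1 : H) * (S z.2.2 * (S (rh.right z.1) * y))) = 0 := by
      rw [Finset.sum_product]
      refine Finset.sum_eq_zero fun i _ => ?_
      dsimp only
      rw [← TensorProduct.tmul_sum]
      have hsum : ∑ p ∈ s, (p.1 : H) * (S p.2 * (S (rh.right i) * y)) = 0 := by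
        have h0 := HopfAlgebra.sum_mul_antipode_eq_algebraMap_counit (R := k) rw'
        have : ∑ p ∈ s, (p.1 : H) * (S p.2 * (S (rh.right i) * y)) =
            (∑ p ∈ s, (p.1 : H) * S p.2) * (S (rh.right i) * y) := by
          rw [Finset.sum_mul]
          exact Finset.sum_congr rfl fun p _ => (mul_assoc _ _ _).symm
        rw [this, h0, hwe', map_zero, zero_mul]
      rw [hsum, TensorProduct.tmul_zero]
    rw [e3]
    exact zero_mem _

lemma hCan_hInv_tmul (I : Submodule k H) (x y : H) :
    hCanMap I (hInvMap (x ⊗ₜ[k] y)) = I.mkQ x ⊗ₜ[k] y := by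
  rw [hCanMap, LinearMap.comp_apply, hGalois_hInv, LinearMap.rTensor_tmul]

lemma hCan_surjective (I : Submodule k H) : Function.Surjective (hCanMap (k := k) (H := H) I) := by
  rw [← LinearMap.range_eq_top, eq_top_iff]
  rintro t -
  induction t using TensorProduct.induction_on with
  | zero => exact zero_mem _
  | tmul u v =>
    obtain ⟨x, rfl⟩ := I.mkQ_surjective u
    exact ⟨hInvMap (x ⊗ₜ[k] v), hCan_hInv_tmul I x v⟩
  | add u v hu hv => exact add_mem hu hv

lemma hInv_range_mem (K : Subalgebra k H) (hK : IsRightCoidealSubalgebra K)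
    (t : ↥(leftIdealGen (augIdeal K.toSubmodule)) ⊗[k] H) :
    hInvMap (LinearMap.rTensor H (leftIdealGen (augIdeal K.toSubmodule)).subtype t) ∈
      hRelSub (K : Set H) := by
  induction t using TensorProduct.induction_on with
  | zero => rw [map_zero, map_zero]; exact zero_mem _
  | tmul u v =>
    rw [LinearMap.rTensor_tmul]
    exact hInv_gen_mem K hK v u.1 u.2
  | add u v hu hv => rw [map_add, map_add]; exact add_mem hu hv

lemma hCan_ker_eq (K : Subalgebra k H) (hK : IsRightCoidealSubalgebra K) :
    LinearMap.ker (hCanMap (leftIdealGen (augIdeal K.toSubmodule))) = hRelSub (K : Set H) := by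
  set I := leftIdealGen (augIdeal K.toSubmodule) with hI
  have hker0 : LinearMap.ker (LinearMap.rTensor H I.mkQ) =
      LinearMap.range (LinearMap.rTensor H I.subtype) := rTensor_mkQ H I
  refine le_antisymm ?_ ?_
  · intro z hz
    have hz' : hGaloisMap z ∈ LinearMap.range (LinearMap.rTensor H I.subtype) := by
      rw [← hker0, LinearMap.mem_ker]
      exact hz
    obtain ⟨t, ht⟩ := hz'
    have : z = hInvMap (LinearMap.rTensor H I.subtype t) := by rw [ht, hInv_hGalois]
    rw [this]
    exact hInv_range_mem K hK t
  · rw [hRelSub, Submodule.span_le]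
    rintro z ⟨x, y, b, hb, rfl⟩
    rw [SetLike.mem_coe, LinearMap.mem_ker, hCanMap, LinearMap.comp_apply, ← LinearMap.mem_ker,
      hker0]
    exact galois_gen_mem K hK x y b hb

lemma K_subset_lCoinv (K : Subalgebra k H) (hK : IsRightCoidealSubalgebra K) :
    (K : Set H) ⊆ lCoinv (leftIdealGen (augIdeal K.toSubmodule)) := by
  intro b hb
  set I := leftIdealGen (augIdeal K.toSubmodule) with hI
  obtain ⟨s, heq⟩ := coideal_repr K hK hb
  set rb : Coalgebra.Repr k b (↥K.toSubmodule × H) := ⟨s, fun p => ((p.1 : H)), fun p => p.2, heq⟩ with hrb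
  show LinearMap.rTensor H I.mkQ (Coalgebra.comul (R := k) b) = I.mkQ 1 ⊗ₜ[k] b
  rw [← heq, map_sum]
  have e1 : ∀ p ∈ s, LinearMap.rTensor H I.mkQ ((p.1 : H) ⊗ₜ[k] p.2) =
      Coalgebra.counit (R := k) ((p.1 : H)) • (I.mkQ 1 ⊗ₜ[k] p.2) := by
    intro p _
    rw [LinearMap.rTensor_tmul]
    have : I.mkQ ((p.1 : H)) = Coalgebra.counit (R := k) ((p.1 : H)) • I.mkQ 1 := by
      rw [← map_smul]
      exact (Submodule.Quotient.eq I).mpr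
        (Submodule.subset_span ⟨1, _, sub_counit_mem_aug K p.1.2, (one_mul _).symm⟩)
    rw [this, TensorProduct.smul_tmul']
  rw [Finset.sum_congr rfl e1]
  have e2 : ∀ p ∈ s, Coalgebra.counit (R := k) ((p.1 : H)) • (I.mkQ 1 ⊗ₜ[k] p.2) =
      I.mkQ 1 ⊗ₜ[k] (Coalgebra.counit (R := k) ((p.1 : H)) • p.2) :=
    fun p _ => (TensorProduct.tmul_smul _ _ _).symm
  rw [Finset.sum_congr rfl e2, ← TensorProduct.tmul_sum, repr_sum_smul_right rb]

lemma hCan_comm_of_lCoinv (W : Submodule k H) (x y b : H)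
    (hb : b ∈ lCoinv (leftIdealGen W)) :
    hCanMap (leftIdealGen W) ((x * b) ⊗ₜ[k] y) = hCanMap (leftIdealGen W) (x ⊗ₜ[k] (b * y)) := by
  set I := leftIdealGen W with hI
  set rx := Coalgebra.Repr.arbitrary k x with hrx
  set rb := Coalgebra.Repr.arbitrary k b with hrb
  have hmul : ∀ h : H, I ≤ I.comap (LinearMap.mulLeft k h) :=
    fun h a ha => leftIdealGen_mul_mem W ha h
  set lq : H → (H ⧸ I →ₗ[k] H ⧸ I) :=
    fun h => Submodule.mapQ I I (LinearMap.mulLeft k h) (hmul h) with hlq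
  have hlq_apply : ∀ h a : H, lq h (I.mkQ a) = I.mkQ (h * a) := by
    intro h a
    simp [hlq, Submodule.mkQ_apply, Submodule.mapQ_apply]
  set G : (H ⧸ I) ⊗[k] H →ₗ[k] (H ⧸ I) ⊗[k] H :=
    ∑ i ∈ rx.index, TensorProduct.map (lq (rx.left i))
      ((LinearMap.mulRight k y).comp (LinearMap.mulLeft k (rx.right i))) with hG
  have hGtmul : ∀ a c : H, G (I.mkQ a ⊗ₜ[k] c) =
      ∑ i ∈ rx.index, I.mkQ (rx.left i * a) ⊗ₜ[k] (rx.right i * c * y) := by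
    intro a c
    rw [hG, LinearMap.sum_apply]
    exact Finset.sum_congr rfl fun i _ => by
      rw [TensorProduct.map_tmul, hlq_apply, LinearMap.comp_apply, LinearMap.mulLeft_apply,
        LinearMap.mulRight_apply]
  have h1 : hCanMap I ((x * b) ⊗ₜ[k] y) =
      G (LinearMap.rTensor H I.mkQ (Coalgebra.comul (R := k) b)) := by
    have eL : hCanMap I ((x * b) ⊗ₜ[k] y) =
        ∑ i ∈ rx.index, ∑ p ∈ rb.index,
          I.mkQ (rx.left i * rb.left p) ⊗ₜ[k] (rx.right i * rb.right p * y) := by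
      rw [hCanMap, LinearMap.comp_apply, hGaloisMap_tmul_repr _ _ (mulRepr rx rb), map_sum]
      have e : ∑ z ∈ (mulRepr rx rb).index,
          LinearMap.rTensor H I.mkQ
            ((mulRepr rx rb).left z ⊗ₜ[k] ((mulRepr rx rb).right z * y)) =
          ∑ z ∈ rx.index ×ˢ rb.index,
            I.mkQ (rx.left z.1 * rb.left z.2) ⊗ₜ[k] (rx.right z.1 * rb.right z.2 * y) :=
        Finset.sum_congr rfl fun z _ => by
          show LinearMap.rTensor H I.mkQ
            ((rx.left z.1 * rb.left z.2) ⊗ₜ[k] ((rx.right z.1 * rb.right z.2) * y)) = _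
          rw [LinearMap.rTensor_tmul]
      rw [e, Finset.sum_product]
    have eR : G (LinearMap.rTensor H I.mkQ (Coalgebra.comul (R := k) b)) =
        ∑ p ∈ rb.index, ∑ i ∈ rx.index,
          I.mkQ (rx.left i * rb.left p) ⊗ₜ[k] (rx.right i * rb.right p * y) := by
      rw [← rb.eq, map_sum, map_sum]
      refine Finset.sum_congr rfl fun p _ => ?_
      rw [LinearMap.rTensor_tmul]
      exact hGtmul _ _
    rw [eL, eR, Finset.sum_comm]
  have h2 : G (I.mkQ 1 ⊗ₜ[k] b) = hCanMap I (x ⊗ₜ[k] (b * y)) := by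
    rw [hGtmul, hCanMap, LinearMap.comp_apply, hGaloisMap_tmul_repr x (b * y) rx, map_sum]
    refine Finset.sum_congr rfl fun i _ => ?_
    rw [LinearMap.rTensor_tmul, mul_one, mul_assoc]
  have hb' : LinearMap.rTensor H I.mkQ (Coalgebra.comul (R := k) b) = I.mkQ 1 ⊗ₜ[k] b := hb
  rw [h1, hb', h2]

lemma hCan_ker_eq_lCoinv (K : Subalgebra k H) (hK : IsRightCoidealSubalgebra K) :
    LinearMap.ker (hCanMap (leftIdealGen (augIdeal K.toSubmodule))) =
      hRelSub (lCoinv (leftIdealGen (augIdeal K.toSubmodule))) := by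
  refine le_antisymm ?_ ?_
  · rw [hCan_ker_eq K hK]
    refine Submodule.span_mono ?_
    rintro z ⟨x, y, b, hb, rfl⟩
    exact ⟨x, y, b, K_subset_lCoinv K hK hb, rfl⟩
  · rw [hRelSub, Submodule.span_le]
    rintro z ⟨x, y, b, hb, rfl⟩
    rw [SetLike.mem_coe, LinearMap.mem_ker, map_sub, hCan_comm_of_lCoinv _ x y b hb, sub_self]


/-- For a right coideal subalgebra `K` of `H` with `I = HK⁺`, the canonical map
`can : H ⊗_K H → (H/HK⁺) ⊗ H`, `x ⊗ y ↦ π(x₁) ⊗ x₂y`, is bijective, with inverse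
induced by `π(x) ⊗ y ↦ x₁ ⊗ S(x₂)y` (which is well defined modulo the relations).
In particular the extension `^{co H/HK⁺}H ⊆ H` is `H/HK⁺`-Galois: the canonical
map over the coinvariants is also bijective. -/
theorem can_bijective_of_rightCoidealSubalgebra (K : Subalgebra k H)
    (hK : IsRightCoidealSubalgebra K) :
    letI I := leftIdealGen (augIdeal K.toSubmodule)
    Function.Surjective (hCanMap I) ∧
    LinearMap.ker (hCanMap I) = hRelSub (K : Set H) ∧
    (∀ x y : H, hCanMap I (hInvMap (x ⊗ₜ[k] y)) = I.mkQ x ⊗ₜ[k] y) ∧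
    (∀ x ∈ I, ∀ y : H, hInvMap (x ⊗ₜ[k] y) ∈ hRelSub (K : Set H)) ∧
    LinearMap.ker (hCanMap I) = hRelSub (lCoinv I) :=
  ⟨hCan_surjective _, hCan_ker_eq K hK, fun x y => hCan_hInv_tmul _ x y,
    fun x hx y => hInv_gen_mem K hK y x hx, hCan_ker_eq_lCoinv K hK⟩
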